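/- Consider the optimal k-means clustering function F (returning a cost-minimizing k-clustering). If (X,d) is (δ, c, c₀, k)-uniquely optimal, then (X,d) is (ε, δ, k)-additive perturbation robust with respect to F for every ε < min((c−1)/2, (−M + √(M² + 4Mc₀))/(2M)), where M = C(n,2) and n = |X|. -/

import Mathlib

/-!
A clustering's k-means cost is a weighted sum `∑ w(x,y) d(x,y)²` over ordered pairs of distinct
points in a common cluster, with weight `1/(2|C|)`, so its square root is a weighted Euclidean norm
of `d`. The weights of a clustering into `k` nonempty clusters add up to `W = (n-k)/2`, so an
`ε`-perturbation moves the square root of every cost by at most `ε√W`. Comparing the optimum `F d'`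
with `F d` on both metrics gives `√cost_d(F d') ≤ √cost_d(F d) + 2ε√W`, and squaring out shows that
`F d'` is a `(c, c₀)`-approximation of the optimum for `d` when `ε` lies below both bounds (using
`W ≤ M/4`, valid once `k ≥ 2`); unique optimality then places it within `δ` of `F d`. For `k ≤ 1`
there is only one clustering.
-/

open Finset

def IsDissim {X : Type*} (d : X → X → ℝ) : Prop :=
  (∀ x y, d x y = d y x) ∧ (∀ x, d x x = 0) ∧ (∀ x y, 0 ≤ d x y)

open Classical in
noncomputable def clDist {X : Type*} [Fintype X] {k l : ℕ}
    (c : X → Fin k) (c' : X → Fin l) : ℝ :=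
  ((Finset.univ.filter fun p : X × X =>
      p.1 ≠ p.2 ∧ ¬((c p.1 = c p.2) ↔ (c' p.1 = c' p.2))).card : ℝ) /
    ((Fintype.card X : ℝ) * ((Fintype.card X : ℝ) - 1))

/-- The `k`-means cost of a clustering `c` of `(X, d)`:
`∑ i, (1/|Cᵢ|) ∑_{{x,y} ⊆ Cᵢ} d(x,y)²` (each unordered pair counted once). -/
noncomputable def kmeansCost {X : Type*} [Fintype X] {k : ℕ}
    (d : X → X → ℝ) (c : X → Fin k) : ℝ :=
  ∑ i : Fin k,
    (1 / ((Finset.univ.filter fun x => c x = i).card : ℝ)) *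
      ((1 : ℝ) / 2 *
        ∑ x ∈ Finset.univ.filter (fun x => c x = i),
          ∑ y ∈ Finset.univ.filter (fun y => c y = i), d x y ^ 2)

theorem sqrt_sum_mul_sq_le_add {ι : Type*} [Fintype ι] (w f g : ι → ℝ) (hw : ∀ i, 0 ≤ w i)
    {ε : ℝ} (hε : 0 ≤ ε) (hfg : ∀ i, |f i - g i| ≤ ε) :
    √(∑ i, w i * f i ^ 2) ≤ √(∑ i, w i * g i ^ 2) + ε * √(∑ i, w i) := by
  have norm_eq (h : ι → ℝ) :
      ‖WithLp.toLp 2 (fun i => √(w i) * h i)‖ = √(∑ i, w i * h i ^ 2) := by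
    simp only [EuclideanSpace.norm_eq, Real.norm_eq_abs, sq_abs, mul_pow, Real.sq_sqrt (hw _)]
  set u := WithLp.toLp 2 (fun i => √(w i) * f i)
  set v := WithLp.toLp 2 (fun i => √(w i) * g i)
  have huv : u - v = WithLp.toLp 2 (fun i => √(w i) * (f i - g i)) := by
    ext i; simp [u, v, mul_sub]
  have hdist : ‖u - v‖ ≤ ε * √(∑ i, w i) := by
    rw [huv, norm_eq, ← Real.sqrt_sq hε, ← Real.sqrt_mul (sq_nonneg ε), mul_sum]
    refine Real.sqrt_le_sqrt (sum_le_sum fun i _ => ?_)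
    rw [mul_comm (ε ^ 2)]
    exact mul_le_mul_of_nonneg_left (sq_le_sq' (abs_le.1 (hfg i)).1 (abs_le.1 (hfg i)).2) (hw i)
  calc √(∑ i, w i * f i ^ 2) = ‖u‖ := (norm_eq f).symm
    _ ≤ ‖v‖ + ‖u - v‖ := norm_le_insert' u v
    _ ≤ √(∑ i, w i * g i ^ 2) + ε * √(∑ i, w i) := by rw [norm_eq]; gcongr

theorem pos_and_lt_of_lt_quadratic_root {M c ε : ℝ} (hε : 0 < ε)
    (h : ε < (-M + √(M ^ 2 + 4 * M * c)) / (2 * M)) : 0 < M ∧ M * ε + M * ε ^ 2 < c := by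
  have hM : 0 < M := by
    by_contra! hM
    have : 0 ≤ -M + √(M ^ 2 + 4 * M * c) := by linarith [Real.sqrt_nonneg (M ^ 2 + 4 * M * c)]
    linarith [div_nonpos_of_nonneg_of_nonpos this (by linarith : 2 * M ≤ 0)]
  refine ⟨hM, ?_⟩
  rw [lt_div_iff₀ (by positivity)] at h
  have := (Real.lt_sqrt (by positivity)).1 (by linarith : M + 2 * M * ε < √(M ^ 2 + 4 * M * c))
  nlinarith

theorem sub_div_two_le_choose_two_div_four {n k : ℕ} (hk : 2 ≤ k) (hkn : k ≤ n) :
    ((n : ℝ) - k) / 2 ≤ (n.choose 2 : ℝ) / 4 := by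
  have hk' : (2 : ℝ) ≤ k := by exact_mod_cast hk
  have hkn' : (k : ℝ) ≤ n := by exact_mod_cast hkn
  rw [Nat.cast_choose_two]
  nlinarith [sq_nonneg (2 * (n : ℝ) - 5)]

section KMeans

variable {X : Type*} [Fintype X] {k : ℕ}

open Classical in
noncomputable def pairWeight (c : X → Fin k) (x y : X) : ℝ :=
  if c x = c y ∧ x ≠ y then ((2 : ℝ) * #{z | c z = c x})⁻¹ else 0

theorem pairWeight_nonneg (c : X → Fin k) (x y : X) : 0 ≤ pairWeight c x y := by
  unfold pairWeight
  split_ifs <;> positivity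

theorem kmeansCost_eq_sum_pairWeight (e : X → X → ℝ) (he : ∀ x, e x x = 0) (c : X → Fin k) :
    kmeansCost e c = ∑ p : X × X, pairWeight c p.1 p.2 * e p.1 p.2 ^ 2 := by
  classical
  have hrow : ∀ i, ∀ x ∈ ({x | c x = i} : Finset X), ∑ y, pairWeight c x y * e x y ^ 2 =
      ((2 : ℝ) * #{z | c z = i})⁻¹ * ∑ y with c y = i, e x y ^ 2 := by
    intro i x hx
    obtain rfl := (mem_filter.1 hx).2
    rw [sum_filter, mul_sum]
    refine sum_congr rfl fun y _ => ?_
    obtain rfl | hxy := eq_or_ne x y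
    · simp [he]
    · simp [pairWeight, hxy, eq_comm]
  rw [Fintype.sum_prod_type, ← sum_fiberwise univ c]
  refine sum_congr rfl fun i _ => ?_
  rw [sum_congr rfl (hrow i), ← mul_sum]
  ring

theorem sum_pairWeight {c : X → Fin k} (hc : Function.Surjective c) :
    ∑ p : X × X, pairWeight c p.1 p.2 = ((Fintype.card X : ℝ) - k) / 2 := by
  classical
  have hrow : ∀ x, ∑ y, pairWeight c x y =
      ((#{z | c z = c x} : ℝ) - 1) * ((2 : ℝ) * #{z | c z = c x})⁻¹ := by
    intro x
    have hfilter :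
        ({y | c x = c y ∧ x ≠ y} : Finset X) = ({z | c z = c x} : Finset X).erase x := by
      ext y; simp [eq_comm, and_comm]
    simp only [pairWeight, sum_ite, sum_const_zero, add_zero, sum_const, nsmul_eq_mul]
    rw [hfilter, card_erase_of_mem (by simp), Nat.cast_pred (card_pos.2 ⟨x, by simp⟩)]
  have hcluster :
      ∀ i, ∑ x with c x = i, ∑ y, pairWeight c x y = ((#{z | c z = i} : ℝ) - 1) / 2 := by
    intro i
    obtain ⟨x₀, rfl⟩ := hc i
    have hpos : (0 : ℝ) < #{z | c z = c x₀} := by exact_mod_cast card_pos.2 ⟨x₀, by simp⟩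
    rw [sum_congr rfl fun x hx => (mem_filter.1 hx).2 ▸ hrow x, sum_const, nsmul_eq_mul]
    field_simp
  rw [Fintype.sum_prod_type, ← sum_fiberwise univ c, sum_congr rfl fun i _ => hcluster i,
    ← sum_div, sum_sub_distrib, ← Nat.cast_sum, ← card_eq_sum_card_fiberwise (by simp)]
  simp

theorem kmeansCost_nonneg (e : X → X → ℝ) (c : X → Fin k) :
    0 ≤ kmeansCost e c := by
  unfold kmeansCost
  positivity

theorem sqrt_kmeansCost_le_add {e e' : X → X → ℝ} (he : ∀ x, e x x = 0)
    (he' : ∀ x, e' x x = 0) {c : X → Fin k} (hc : Function.Surjective c)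
    {ε : ℝ} (hε : 0 ≤ ε) (hee' : ∀ x y, |e x y - e' x y| ≤ ε) :
    √(kmeansCost e c) ≤ √(kmeansCost e' c) + ε * √(((Fintype.card X : ℝ) - k) / 2) := by
  rw [kmeansCost_eq_sum_pairWeight e he, kmeansCost_eq_sum_pairWeight e' he', ← sum_pairWeight hc]
  exact sqrt_sum_mul_sq_le_add _ _ _ (fun p : X × X => pairWeight_nonneg c p.1 p.2) hε
    fun p => hee' p.1 p.2

end KMeans

theorem le_mul_add_of_sqrt_le_sqrt_add {A S W M cc c₀ ε : ℝ} (hS : 0 ≤ S) (hW : 0 ≤ W)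
    (hWM : W ≤ M / 4) (hε : 0 ≤ ε) (hcc : 1 + 2 * ε ≤ cc) (hc₀ : M * ε + M * ε ^ 2 ≤ c₀)
    (h : √A ≤ √S + 2 * ε * √W) : A ≤ cc * S + c₀ := by
  have hamgm : 2 * (√S * √W) ≤ S + W := by
    nlinarith [sq_nonneg (√S - √W), Real.sq_sqrt hS, Real.sq_sqrt hW]
  calc A ≤ (√S + 2 * ε * √W) ^ 2 := (Real.sqrt_le_left (by positivity)).1 h
    _ = S + 2 * ε * (2 * (√S * √W)) + 4 * ε ^ 2 * W := by
      rw [add_sq, mul_pow, mul_pow, Real.sq_sqrt hS, Real.sq_sqrt hW]; ring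
    _ ≤ S + 2 * ε * (S + W) + 4 * ε ^ 2 * W := by gcongr
    _ ≤ cc * S + c₀ := by nlinarith [mul_le_mul_of_nonneg_right hcc hS]

/-- If `(X, d)` is `(δ, c, c₀, k)`-uniquely optimal for the optimal `k`-means clustering
function `F`, then `(X, d)` is `(ε, δ, k)`-additive perturbation robust for every
`ε < min((c-1)/2, (-M + √(M² + 4·M·c₀))/(2M))`, where `M = C(n,2)`. -/
theorem kmeans_uniquely_optimal_implies_additive_robust
    {X : Type*} [Fintype X] {k : ℕ}
    (F : (X → X → ℝ) → (X → Fin k))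
    (hF : ∀ e : X → X → ℝ, IsDissim e → Function.Surjective (F e) ∧
      ∀ c : X → Fin k, Function.Surjective c → kmeansCost e (F e) ≤ kmeansCost e c)
    (d : X → X → ℝ) (hd : IsDissim d)
    (δ cc c₀ : ℝ) (M : ℝ) (hM : M = (Nat.choose (Fintype.card X) 2 : ℝ))
    (hUO : ∀ c : X → Fin k, Function.Surjective c →
      kmeansCost d c ≤ cc * kmeansCost d (F d) + c₀ → clDist (F d) c < δ)
    (ε : ℝ) (hε : 0 < ε)
    (hεbound : ε < min ((cc - 1) / 2) ((-M + Real.sqrt (M ^ 2 + 4 * M * c₀)) / (2 * M))) :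
    ∀ d' : X → X → ℝ, IsDissim d' → (∀ x y, |d' x y - d x y| ≤ ε) →
      clDist (F d) (F d') < δ := by
  intro d' hd' hpert
  obtain ⟨hεcc, hεM⟩ := lt_min_iff.1 hεbound
  obtain ⟨hMpos, hc₀⟩ := pos_and_lt_of_lt_quadratic_root hε hεM
  obtain ⟨hsurj, -⟩ := hF d hd
  obtain ⟨hsurj', hopt'⟩ := hF d' hd'
  refine hUO (F d') hsurj' ?_
  have hS := kmeansCost_nonneg d (F d)
  rcases le_or_gt k 1 with hk | hk
  · have : Subsingleton (Fin k) := Fin.subsingleton_iff_le_one.2 hk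
    rw [show F d' = F d from funext fun _ => Subsingleton.elim _ _]
    nlinarith
  have hkn : k ≤ Fintype.card X := by simpa using Fintype.card_le_of_surjective _ hsurj
  set W : ℝ := ((Fintype.card X : ℝ) - k) / 2
  have hW : 0 ≤ W := div_nonneg (sub_nonneg.2 (by exact_mod_cast hkn)) zero_le_two
  refine le_mul_add_of_sqrt_le_sqrt_add hS hW (hM ▸ sub_div_two_le_choose_two_div_four hk hkn)
    hε.le (by linarith) hc₀.le ?_
  calc √(kmeansCost d (F d')) ≤ √(kmeansCost d' (F d')) + ε * √W :=
        sqrt_kmeansCost_le_add hd.2.1 hd'.2.1 hsurj' hε.le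
          fun x y => abs_sub_comm (d x y) _ ▸ hpert x y
    _ ≤ √(kmeansCost d' (F d)) + ε * √W := by gcongr; exact hopt' _ hsurj
    _ ≤ √(kmeansCost d (F d)) + ε * √W + ε * √W := by
        gcongr; exact sqrt_kmeansCost_le_add hd'.2.1 hd.2.1 hsurj hε.le hpert
    _ = √(kmeansCost d (F d)) + 2 * ε * √W := by ring
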